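/- Let G₂ ⊊ ℝⁿ be a domain and let G₁ ⊂ G₂ be a bounded subdomain (nonempty, open, connected, containing at least two points). Set c = 1 + 2·dist(G₁, ∂G₂)/diam(G₁). Then for all x, y ∈ G₁, k_{G₁}(x,y) ≥ c · k_{G₂}(x,y). -/

import Mathlib

/-!
For `z ∈ G₁` let `r = δ_{G₁}(z)`. The ball `B(z, r)` lies in `G₁`, so `2r ≤ diam G₁`. The segment
from `z` to a point of `∂G₂` leaves `G₁` through `∂G₁`, at distance at least `r` from `z` and at
least `dist(G₁, ∂G₂)` from its endpoint, so `r + dist(G₁, ∂G₂) ≤ δ_{G₂}(z)`. Together,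
`c · δ_{G₁} ≤ δ_{G₂}` on `G₁`, and integrating `|dz| / δ` along any `C¹` path in `G₁` compares the
two quasihyperbolic lengths.
-/

open Set Metric

/-- The Euclidean distance from a point to the boundary of `G`. -/
noncomputable def bdist {n : ℕ} (G : Set (EuclideanSpace ℝ (Fin n)))
    (x : EuclideanSpace ℝ (Fin n)) : ℝ :=
  Metric.infDist x (frontier G)

/-- The quasihyperbolic length of a path `γ` (parametrized on `[0,1]`) in `G`. -/
noncomputable def qhLength {n : ℕ} (G : Set (EuclideanSpace ℝ (Fin n)))
    (γ : ℝ → EuclideanSpace ℝ (Fin n)) : ℝ :=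
  ∫ t in (0:ℝ)..1, ‖deriv γ t‖ / bdist G (γ t)

/-- The quasihyperbolic metric of `G`: the infimum of quasihyperbolic lengths of
paths joining `x` and `y` inside `G`. -/
noncomputable def qhDist {n : ℕ} (G : Set (EuclideanSpace ℝ (Fin n)))
    (x y : EuclideanSpace ℝ (Fin n)) : ℝ :=
  ⨅ γ : {γ : ℝ → EuclideanSpace ℝ (Fin n) // γ 0 = x ∧ γ 1 = y ∧
      (∀ t ∈ Set.Icc (0:ℝ) 1, γ t ∈ G) ∧ ContDiffOn ℝ 1 γ (Set.Icc 0 1)},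
    qhLength G γ.1

/-- The distance ratio metric of `G`. -/
noncomputable def jDist {n : ℕ} (G : Set (EuclideanSpace ℝ (Fin n)))
    (x y : EuclideanSpace ℝ (Fin n)) : ℝ :=
  Real.log (1 + dist x y / min (bdist G x) (bdist G y))

/-- The distance between two sets: the infimum of distances between their points. -/
noncomputable def setDist {n : ℕ} (A B : Set (EuclideanSpace ℝ (Fin n))) : ℝ :=
  sInf (Set.image2 dist A B)

theorem IsPreconnected.inter_frontier_nonempty {X : Type*} [TopologicalSpace X] {s t : Set X}
    (hs : IsPreconnected s) (hst : (s ∩ t).Nonempty) (hst' : (s \ t).Nonempty) :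
    (s ∩ frontier t).Nonempty := by
  by_contra hdisj
  have hsplit : ∀ p ∈ s, p ∈ interior t ∨ p ∉ closure t := fun p hp => by
    by_contra! h
    exact hdisj ⟨p, hp, h.2, h.1⟩
  obtain ⟨a, has, hat⟩ := hst
  obtain ⟨b, hbs, hbt⟩ := hst'
  obtain ⟨p, -, hpt, hpt'⟩ := hs _ _ isOpen_interior isClosed_closure.isOpen_compl hsplit
    ⟨a, has, (hsplit a has).resolve_right (not_not.2 (subset_closure hat))⟩
    ⟨b, hbs, (hsplit b hbs).resolve_left fun h => hbt (interior_subset h)⟩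
  exact hpt' (interior_subset_closure hpt)

section NormedSpace

variable {E : Type*} [NormedAddCommGroup E] [NormedSpace ℝ E] {s : Set E} {z w : E}

theorem infDist_frontier_add_infDist_le_dist (hz : z ∈ s) (hw : w ∉ s) :
    infDist z (frontier s) + infDist w s ≤ dist z w := by
  obtain ⟨p, hp, hps⟩ := (convex_segment z w).isPreconnected.inter_frontier_nonempty
    ⟨z, left_mem_segment ℝ z w, hz⟩ ⟨w, right_mem_segment ℝ z w, hw⟩
  calc infDist z (frontier s) + infDist w s
      ≤ dist z p + dist w p := by
        rw [← infDist_closure (s := s)]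
        exact add_le_add (infDist_le_dist_of_mem hps) (infDist_le_dist_of_mem hps.1)
    _ = dist z w := by rw [dist_comm w p, dist_add_dist_of_mem_segment hp]

theorem infDist_frontier_le_dist (hz : z ∈ s) (hw : w ∉ s) :
    infDist z (frontier s) ≤ dist z w :=
  le_of_add_le_of_nonneg_left (infDist_frontier_add_infDist_le_dist hz hw) infDist_nonneg

theorem ball_infDist_frontier_subset (hz : z ∈ s) : ball z (infDist z (frontier s)) ⊆ s :=
  fun w hw => by
    by_contra hws
    exact (infDist_frontier_le_dist hz hws).not_gt (mem_ball'.1 hw)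

theorem two_mul_infDist_frontier_le_diam (hs : Bornology.IsBounded s) (hz : z ∈ s) :
    2 * infDist z (frontier s) ≤ diam s := by
  rcases subsingleton_or_nontrivial E with hE | hE
  · simp [Subsingleton.eq_univ_of_nonempty ⟨z, hz⟩, diam_nonneg]
  · rw [← diam_ball_eq z infDist_nonneg]
    exact diam_mono (ball_infDist_frontier_subset hz) hs

end NormedSpace

section ContDiffPath

variable {E : Type*} [NormedAddCommGroup E] [NormedSpace ℝ E]

def JoinedByContDiffPath (k : ℕ∞) (G : Set E) (x y : E) : Prop :=
  ∃ γ : ℝ → E, ContDiff ℝ k γ ∧ γ 0 = x ∧ γ 1 = y ∧ ∀ t, γ t ∈ G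

variable {k : ℕ∞} {G : Set E} {x y z : E}

theorem joinedByContDiffPath_of_convex {C : Set E} (hC : Convex ℝ C) (hCG : C ⊆ G) (hx : x ∈ C)
    (hy : y ∈ C) : JoinedByContDiffPath k G x y := by
  refine ⟨fun t => x + Real.smoothTransition t • (y - x),
    contDiff_const.add (Real.smoothTransition.contDiff.smul contDiff_const), by simp, by simp,
    fun t => hCG (hC.add_smul_sub_mem hx hy ?_)⟩
  exact ⟨Real.smoothTransition.nonneg t, Real.smoothTransition.le_one t⟩

/-- The concatenation is `γ₁ ∘ σ₁ + γ₂ ∘ σ₂ - y`, each reparametrized path parked at `y` while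
the other runs, so that no gluing by cases is needed. -/
theorem JoinedByContDiffPath.trans (h₁ : JoinedByContDiffPath k G x y)
    (h₂ : JoinedByContDiffPath k G y z) : JoinedByContDiffPath k G x z := by
  obtain ⟨γ₁, hγ₁, h₁0, h₁1, h₁G⟩ := h₁
  obtain ⟨γ₂, hγ₂, h₂0, h₂1, h₂G⟩ := h₂
  set σ₁ : ℝ → ℝ := fun t => Real.smoothTransition (2 * t)
  set σ₂ : ℝ → ℝ := fun t => Real.smoothTransition (2 * t - 1)
  refine ⟨fun t => γ₁ (σ₁ t) + γ₂ (σ₂ t) - y, ?_, ?_, ?_, fun t => ?_⟩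
  · exact ((hγ₁.comp (Real.smoothTransition.contDiff.comp (by fun_prop))).add
      (hγ₂.comp (Real.smoothTransition.contDiff.comp (by fun_prop)))).sub contDiff_const
  · simp [σ₁, σ₂, Real.smoothTransition.zero_of_nonpos, h₁0, h₂0]
  · norm_num [σ₁, σ₂, Real.smoothTransition.one_of_one_le, h₁1, h₂1]
  · rcases le_total t (1 / 2) with ht | ht
    · have : σ₂ t = 0 := Real.smoothTransition.zero_of_nonpos (by linarith)
      simpa [this, h₂0] using h₁G (σ₁ t)
    · have : σ₁ t = 1 := Real.smoothTransition.one_of_one_le (by linarith)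
      simpa [this, h₁1] using h₂G (σ₂ t)

theorem IsOpen.joinedByContDiffPath (hG : IsOpen G) (hGc : IsPreconnected G) (hx : x ∈ G)
    (hy : y ∈ G) : JoinedByContDiffPath k G x y := by
  refine hGc.induction₂' _ (fun a ha => ?_) (fun _ _ _ _ _ _ h h' => h.trans h') hx hy
  obtain ⟨ε, hε, hball⟩ := isOpen_iff.1 hG a ha
  filter_upwards [mem_nhdsWithin_of_mem_nhds (ball_mem_nhds a hε)] with b hb
  exact ⟨joinedByContDiffPath_of_convex (convex_ball a ε) hball (mem_ball_self hε) hb,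
    joinedByContDiffPath_of_convex (convex_ball a ε) hball hb (mem_ball_self hε)⟩

end ContDiffPath

section Euclidean

variable {n : ℕ} {A B G G' : Set (EuclideanSpace ℝ (Fin n))} {w z : EuclideanSpace ℝ (Fin n)}

theorem setDist_nonneg : 0 ≤ setDist A B :=
  Real.sInf_nonneg (forall_mem_image2.2 fun _ _ _ _ => dist_nonneg)

theorem setDist_le_infDist (hw : w ∈ B) : setDist A B ≤ infDist w A := by
  rcases A.eq_empty_or_nonempty with rfl | hA
  · simp [setDist]
  · refine (le_infDist hA).2 fun a ha => ?_
    rw [dist_comm]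
    exact csInf_le ⟨0, forall_mem_image2.2 fun _ _ _ _ => dist_nonneg⟩ (mem_image2_of_mem ha hw)

theorem bdist_pos (hG : IsOpen G) (hfr : (frontier G).Nonempty) (hz : z ∈ G) : 0 < bdist G z :=
  (isClosed_frontier.notMem_iff_infDist_pos hfr).1 fun h => hG.inter_frontier_eq.subset ⟨hz, h⟩

theorem bdist_add_setDist_le (hG' : IsOpen G') (hGG' : G ⊆ G') (hfr : (frontier G').Nonempty)
    (hz : z ∈ G) : bdist G z + setDist G (frontier G') ≤ bdist G' z := by
  refine (le_infDist hfr).2 fun w hw => ?_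
  have hwG : w ∉ G := fun h => hG'.inter_frontier_eq.subset ⟨hGG' h, hw⟩
  calc bdist G z + setDist G (frontier G') ≤ bdist G z + infDist w G := by
        gcongr; exact setDist_le_infDist hw
    _ ≤ dist z w := infDist_frontier_add_infDist_le_dist hz hwG

theorem mul_bdist_le_bdist (hG' : IsOpen G') (hGG' : G ⊆ G') (hfr : (frontier G').Nonempty)
    (hGb : Bornology.IsBounded G) (hz : z ∈ G) :
    (1 + 2 * setDist G (frontier G') / diam G) * bdist G z ≤ bdist G' z := by
  have hratio : 2 * bdist G z / diam G ≤ 1 :=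
    div_le_one_of_le₀ (two_mul_infDist_frontier_le_diam hGb hz) diam_nonneg
  calc (1 + 2 * setDist G (frontier G') / diam G) * bdist G z
      = bdist G z + setDist G (frontier G') * (2 * bdist G z / diam G) := by ring
    _ ≤ bdist G z + setDist G (frontier G') * 1 := by gcongr; exact setDist_nonneg
    _ ≤ bdist G' z := by simpa using bdist_add_setDist_le hG' hGG' hfr hz

end Euclidean

section QuasihyperbolicLength

variable {n : ℕ} {G G' : Set (EuclideanSpace ℝ (Fin n))} {x y : EuclideanSpace ℝ (Fin n)}
  {γ : ℝ → EuclideanSpace ℝ (Fin n)}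

/-- The index type of the infimum defining `qhDist G x y`. -/
abbrev QHPath (G : Set (EuclideanSpace ℝ (Fin n))) (x y : EuclideanSpace ℝ (Fin n)) : Type :=
  {γ : ℝ → EuclideanSpace ℝ (Fin n) // γ 0 = x ∧ γ 1 = y ∧
      (∀ t ∈ Icc (0:ℝ) 1, γ t ∈ G) ∧ ContDiffOn ℝ 1 γ (Icc 0 1)}

theorem qhLength_nonneg (G : Set (EuclideanSpace ℝ (Fin n))) (γ : ℝ → EuclideanSpace ℝ (Fin n)) :
    0 ≤ qhLength G γ :=
  intervalIntegral.integral_nonneg zero_le_one fun _ _ => div_nonneg (norm_nonneg _) infDist_nonneg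

theorem qhDist_le_qhLength (γ : QHPath G x y) : qhDist G x y ≤ qhLength G γ.1 := by
  unfold qhDist
  refine ciInf_le ⟨0, ?_⟩ γ
  rintro _ ⟨γ', rfl⟩
  exact qhLength_nonneg G γ'.1

theorem le_qhDist [Nonempty (QHPath G x y)] {a : ℝ} (h : ∀ γ : QHPath G x y, a ≤ qhLength G γ.1) :
    a ≤ qhDist G x y := by
  unfold qhDist
  exact le_ciInf h

theorem nonempty_qhPath (hG : IsOpen G) (hGc : IsPreconnected G) (hx : x ∈ G) (hy : y ∈ G) :
    Nonempty (QHPath G x y) :=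
  let ⟨γ, hγ, h0, h1, hγG⟩ := hG.joinedByContDiffPath (k := 1) hGc hx hy
  ⟨⟨γ, h0, h1, fun t _ => hγG t, hγ.contDiffOn⟩⟩

/-- `deriv` and `derivWithin` agree on the interior `(0, 1)`, which is all the integral sees. -/
theorem qhLength_eq_integral_derivWithin (G : Set (EuclideanSpace ℝ (Fin n)))
    (γ : ℝ → EuclideanSpace ℝ (Fin n)) :
    qhLength G γ = ∫ t in (0:ℝ)..1, ‖derivWithin γ (Icc 0 1) t‖ / bdist G (γ t) := by
  refine intervalIntegral.integral_congr_ae ?_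
  filter_upwards [MeasureTheory.volume.ae_ne 1] with t ht1 ht
  rw [uIoc_of_le zero_le_one] at ht
  rw [derivWithin_of_mem_nhds (Icc_mem_nhds ht.1 (lt_of_le_of_ne ht.2 ht1))]

theorem mul_qhLength_le_qhLength {c : ℝ} (hc : 0 < c) (hγ : ContDiffOn ℝ 1 γ (Icc 0 1))
    (hpos : ∀ t ∈ Icc (0:ℝ) 1, 0 < bdist G (γ t))
    (hle : ∀ t ∈ Icc (0:ℝ) 1, c * bdist G (γ t) ≤ bdist G' (γ t)) :
    c * qhLength G' γ ≤ qhLength G γ := by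
  have hγ' : ContinuousOn (fun t => ‖derivWithin γ (Icc 0 1) t‖) (Icc 0 1) :=
    (hγ.continuousOn_derivWithin (uniqueDiffOn_Icc zero_lt_one) le_rfl).norm
  have hbdist (H : Set (EuclideanSpace ℝ (Fin n))) :
      ContinuousOn (fun t => bdist H (γ t)) (Icc 0 1) :=
    (continuous_infDist_pt _).comp_continuousOn hγ.continuousOn
  have hpos' : ∀ t ∈ Icc (0:ℝ) 1, 0 < bdist G' (γ t) :=
    fun t ht => (mul_pos hc (hpos t ht)).trans_le (hle t ht)
  rw [qhLength_eq_integral_derivWithin, qhLength_eq_integral_derivWithin,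
    ← intervalIntegral.integral_const_mul]
  refine intervalIntegral.integral_mono_on zero_le_one ?_ ?_ fun t ht => ?_
  · refine ContinuousOn.intervalIntegrable ?_
    rw [uIcc_of_le zero_le_one]
    exact continuousOn_const.mul (hγ'.div (hbdist G') fun t ht => (hpos' t ht).ne')
  · refine ContinuousOn.intervalIntegrable ?_
    rw [uIcc_of_le zero_le_one]
    exact hγ'.div (hbdist G) fun t ht => (hpos t ht).ne'
  · have hinv : c / bdist G' (γ t) ≤ 1 / bdist G (γ t) :=
      (div_le_div_iff₀ (hpos' t ht) (hpos t ht)).2 (by simpa using hle t ht)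
    calc c * (‖derivWithin γ (Icc 0 1) t‖ / bdist G' (γ t))
        = ‖derivWithin γ (Icc 0 1) t‖ * (c / bdist G' (γ t)) := by ring
      _ ≤ ‖derivWithin γ (Icc 0 1) t‖ * (1 / bdist G (γ t)) := by gcongr
      _ = ‖derivWithin γ (Icc 0 1) t‖ / bdist G (γ t) := by ring

theorem mul_qhDist_le_qhDist {c : ℝ} (hc : 0 < c) (hGG' : G ⊆ G') [Nonempty (QHPath G x y)]
    (hpos : ∀ z ∈ G, 0 < bdist G z) (hle : ∀ z ∈ G, c * bdist G z ≤ bdist G' z) :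
    c * qhDist G' x y ≤ qhDist G x y :=
  le_qhDist fun ⟨γ, h0, h1, hγG, hγ⟩ => calc
    c * qhDist G' x y ≤ c * qhLength G' γ := by
      gcongr; exact qhDist_le_qhLength ⟨γ, h0, h1, fun t ht => hGG' (hγG t ht), hγ⟩
    _ ≤ qhLength G γ := mul_qhLength_le_qhLength hc hγ (fun t ht => hpos _ (hγG t ht))
        fun t ht => hle _ (hγG t ht)

end QuasihyperbolicLength

theorem stmt_16_general (n : ℕ) (G₁ G₂ : Set (EuclideanSpace ℝ (Fin n)))
    (hG₂o : IsOpen G₂) (hG₂p : G₂ ≠ Set.univ)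
    (hsub : G₁ ⊆ G₂) (hG₁o : IsOpen G₁) (hG₁c : IsConnected G₁)
    (hG₁b : Bornology.IsBounded G₁)
    (x y : EuclideanSpace ℝ (Fin n)) (hx : x ∈ G₁) (hy : y ∈ G₁) :
    (1 + 2 * setDist G₁ (frontier G₂) / Metric.diam G₁) * qhDist G₂ x y ≤
      qhDist G₁ x y := by
  have hfr₂ : (frontier G₂).Nonempty := nonempty_frontier_iff.2 ⟨⟨x, hsub hx⟩, hG₂p⟩
  have hfr₁ : (frontier G₁).Nonempty :=
    nonempty_frontier_iff.2 ⟨⟨x, hx⟩, fun h => hG₂p (univ_subset_iff.1 (h ▸ hsub))⟩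
  have hc : 0 < 1 + 2 * setDist G₁ (frontier G₂) / diam G₁ := by
    have := setDist_nonneg (A := G₁) (B := frontier G₂)
    positivity
  have := nonempty_qhPath hG₁o hG₁c.isPreconnected hx hy
  exact mul_qhDist_le_qhDist hc hsub (fun z hz => bdist_pos hG₁o hfr₁ hz)
    fun z hz => mul_bdist_le_bdist hG₂o hsub hfr₂ hG₁b hz

theorem stmt_16 (n : ℕ) (G₁ G₂ : Set (EuclideanSpace ℝ (Fin n)))
    (hG₂o : IsOpen G₂) (hG₂c : IsConnected G₂) (hG₂p : G₂ ≠ Set.univ)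
    (hsub : G₁ ⊆ G₂) (hG₁o : IsOpen G₁) (hG₁c : IsConnected G₁)
    (hG₁b : Bornology.IsBounded G₁) (hG₁nt : G₁.Nontrivial)
    (x y : EuclideanSpace ℝ (Fin n)) (hx : x ∈ G₁) (hy : y ∈ G₁) :
    (1 + 2 * setDist G₁ (frontier G₂) / Metric.diam G₁) * qhDist G₂ x y ≤
      qhDist G₁ x y :=
  stmt_16_general n G₁ G₂ hG₂o hG₂p hsub hG₁o hG₁c hG₁b x y hx hy
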